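/- Let p be a prime, q = p^m, and k a positive integer dividing q − 1, with n = (q − 1)/k. Let Ā be the q × q complex matrix indexed by 𝔽_q with Ā(u,v) = 1 if u ≠ v and v − u ∉ R_k, and Ā(u,v) = 0 otherwise (the adjacency matrix of the complement of Γ(k,q)). Then the characteristic polynomial of Ā equals (X − (k−1)n)·∏_{i=0}^{k−1} (X − (−1 − η_i))^n in ℂ[X]. -/

import Mathlib

open Polynomial Finset
open scoped Classical

/-- The `i`-th cyclotomic Gaussian period for the pair `(k, q)`, where `q = #F`,
`ω` is a generator of `Fˣ` and the coset `ω^i⟨ω^k⟩` is described as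
`{ω^i y^k : y ∈ Fˣ}`. -/
noncomputable def gaussianPeriod (p : ℕ) (F : Type) [Field F] [Fintype F]
    [Algebra (ZMod p) F] (ω : Fˣ) (k i : ℕ) : ℂ :=
  ∑ x ∈ Finset.univ.filter (fun x : Fˣ => ∃ y : Fˣ, x = ω ^ i * y ^ k),
    Complex.exp (2 * Real.pi * Complex.I *
      ((Algebra.trace (ZMod p) F (x : F)).val : ℂ) / (p : ℂ))

/-- The complex adjacency matrix of the generalized Paley (di)graph `Γ(k,q)`:
there is an arrow from `u` to `v` iff `v - u` is a nonzero `k`-th power. -/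
noncomputable def gpAdj (F : Type) [Field F] [Fintype F] (k : ℕ) : Matrix F F ℂ :=
  Matrix.of fun u v => if ∃ x : Fˣ, v - u = (x : F) ^ k then 1 else 0

/-- The generalized Paley graph `Γ(k,q)` as a simple graph (when the connection
set is symmetric, `fromRel` gives exactly the intended graph). -/
def gpGraph (F : Type) [Field F] (k : ℕ) : SimpleGraph F :=
  SimpleGraph.fromRel fun u v => ∃ x : Fˣ, v - u = (x : F) ^ k

/-- The complex adjacency matrix of the complement of `Γ(k,q)`. -/
noncomputable def gpAdjCompl (F : Type) [Field F] [Fintype F] (k : ℕ) : Matrix F F ℂ :=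
  Matrix.of fun u v => if u ≠ v ∧ ¬ (∃ x : Fˣ, v - u = (x : F) ^ k) then 1 else 0

/-! The complement of `Γ(k,q)` is a Cayley digraph of the additive group of `F`, so its adjacency
matrix `u, v ↦ f (v - u)` is diagonalised by the additive characters `x ↦ ψ (a * x)`, where
`ψ x = exp (2πi Tr(x) / p)`; the eigenvalue at `a` is `∑ c, f c * ψ (a * c)`. At `a = 0` this is
the out-degree `(k - 1) n`. For `a = ω ^ i * y ^ k` the sum of `ψ (a * ·)` over `F` vanishes and
its sum over the nonzero `k`-th powers is `η_i`, which leaves `-1 - η_i`. Running `a` over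
`ω ^ j`, `j < kn`, each residue `i = j mod k` occurs `n` times. -/

namespace Matrix

variable {ι R : Type*} [Fintype ι] [DecidableEq ι] [CommRing R]

theorem charpoly_eq_of_mul_eq_mul {M N U : Matrix ι ι R} (hU : IsUnit U.det)
    (h : M * U = U * N) : M.charpoly = N.charpoly := by
  have hM : M = U * (N * U⁻¹) := by
    rw [← Matrix.mul_assoc, ← h, Matrix.mul_assoc, mul_nonsing_inv _ hU, Matrix.mul_one]
  rw [hM, charpoly_mul_comm, Matrix.mul_assoc, nonsing_inv_mul _ hU, Matrix.mul_one]

end Matrix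

section UnitsSum

variable {G₀ M : Type*} [GroupWithZero G₀] [Fintype G₀] [DecidableEq G₀]

theorem Fintype.prod_eq_apply_zero_mul_prod_units [CommMonoid M] (f : G₀ → M) :
    ∏ x, f x = f 0 * ∏ u : G₀ˣ, f u := by
  rw [Fintype.prod_eq_mul_prod_subtype_ne f 0, ← unitsEquivNeZero.prod_comp]
  rfl

theorem Fintype.sum_eq_apply_zero_add_sum_units [AddCommMonoid M] (f : G₀ → M) :
    ∑ x, f x = f 0 + ∑ u : G₀ˣ, f u := by
  rw [Fintype.sum_eq_add_sum_subtype_ne f 0, ← unitsEquivNeZero.sum_comp]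
  rfl

end UnitsSum

theorem IsCyclic.prod_eq_prod_range_orderOf {G M : Type*} [Group G] [Fintype G] [DecidableEq G]
    [CommMonoid M] {ω : G} (hω : ∀ x, x ∈ Subgroup.zpowers ω) (f : G → M) :
    ∏ x, f x = ∏ j ∈ range (orderOf ω), f (ω ^ j) := by
  rw [← IsCyclic.image_range_orderOf hω, prod_image]
  exact fun i hi j hj => pow_injOn_Iio_orderOf (by simpa using hi) (by simpa using hj)

theorem Function.Periodic.prod_range_mul {M : Type*} [CommMonoid M] {f : ℕ → M} {k : ℕ}
    (hf : Function.Periodic f k) (n : ℕ) :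
    ∏ j ∈ range (k * n), f j = (∏ j ∈ range k, f j) ^ n := by
  induction n with
  | zero => simp
  | succ n ih =>
    rw [Nat.mul_succ, prod_range_add, ih, pow_succ]
    congr 1
    refine prod_congr rfl fun j _ => ?_
    rw [add_comm, mul_comm]
    exact_mod_cast hf.nat_mul n j

namespace AddChar

variable {R : Type*} [CommRing R] [Fintype R]

noncomputable def fourierMatrix (ψ : AddChar R ℂ) : Matrix R R ℂ := Matrix.of fun x a => ψ (a * x)

variable {ψ : AddChar R ℂ}

theorem fourierMatrix_mul_fourierMatrix_inv [DecidableEq R] (hψ : ψ.IsPrimitive) :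
    fourierMatrix ψ * fourierMatrix ψ⁻¹ = (Fintype.card R : ℂ) • 1 := by
  ext x y
  have hterm (a : R) : ψ (a * x) * ψ⁻¹ (y * a) = ψ (a * (x - y)) := by
    rw [inv_apply', ← map_neg_eq_inv, ← map_add_eq_mul]
    ring_nf
  simp only [Matrix.mul_apply, fourierMatrix, Matrix.of_apply, hterm, sum_mulShift _ hψ,
    sub_eq_zero, Nat.cast_ite, Nat.cast_zero, Matrix.smul_apply, Matrix.one_apply, smul_eq_mul,
    mul_ite, mul_one, mul_zero]

theorem isUnit_det_fourierMatrix [DecidableEq R] (hψ : ψ.IsPrimitive) :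
    IsUnit (fourierMatrix ψ).det := by
  refine Matrix.isUnit_det_of_right_inverse (B := (Fintype.card R : ℂ)⁻¹ • fourierMatrix ψ⁻¹) ?_
  rw [Matrix.mul_smul, fourierMatrix_mul_fourierMatrix_inv hψ, smul_smul,
    inv_mul_cancel₀ (by simp), one_smul]

theorem convolution_mul_fourierMatrix [DecidableEq R] (ψ : AddChar R ℂ) (f : R → ℂ) :
    (Matrix.of fun u v => f (v - u)) * fourierMatrix ψ =
      fourierMatrix ψ * Matrix.diagonal fun a => ∑ c, f c * ψ (a * c) := by
  ext u a
  rw [Matrix.mul_diagonal, Matrix.mul_apply, ← Equiv.sum_comp (Equiv.addRight u), mul_sum]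
  refine sum_congr rfl fun c _ => ?_
  simp only [fourierMatrix, Matrix.of_apply, Equiv.coe_addRight, add_sub_cancel_right, mul_add,
    map_add_eq_mul]
  ring

theorem IsPrimitive.charpoly_convolution (hψ : ψ.IsPrimitive) (f : R → ℂ) :
    (Matrix.of fun u v => f (v - u)).charpoly = ∏ a, (X - C (∑ c, f c * ψ (a * c))) := by
  rw [Matrix.charpoly_eq_of_mul_eq_mul (isUnit_det_fourierMatrix hψ)
    (convolution_mul_fourierMatrix ψ f), Matrix.charpoly_diagonal]

end AddChar

section ComplementIndicator

variable {F : Type} [Field F] [Fintype F]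

noncomputable def gpComplIndicator (k : ℕ) (c : F) : ℂ :=
  if c ≠ 0 ∧ ¬∃ x : Fˣ, c = (x : F) ^ k then 1 else 0

theorem gpAdjCompl_eq_convolution (k : ℕ) :
    gpAdjCompl F k = Matrix.of fun u v => gpComplIndicator k (v - u) := by
  ext u v
  simp [gpAdjCompl, gpComplIndicator, sub_ne_zero, ne_comm]

theorem sum_gpComplIndicator_mul (k : ℕ) (g : F → ℂ) :
    ∑ c, gpComplIndicator k c * g c =
      ∑ u : Fˣ, g u - ∑ u ∈ univ.filter (· ∈ (powMonoidHom k : Fˣ →* Fˣ).range), g u := by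
  have hpow (u : Fˣ) : (∃ x : Fˣ, (u : F) = (x : F) ^ k) ↔ u ∈ (powMonoidHom k).range := by
    simp [Units.ext_iff, eq_comm]
  rw [Fintype.sum_eq_apply_zero_add_sum_units, ← sum_filter_add_sum_filter_not univ
    (· ∈ (powMonoidHom k : Fˣ →* Fˣ).range) (fun u : Fˣ => g u), add_sub_cancel_left, sum_filter]
  simp only [gpComplIndicator, ne_eq, not_true_eq_false, false_and, if_false, zero_mul, zero_add,
    Units.ne_zero, not_false_eq_true, true_and, hpow, ite_mul, one_mul]

theorem sum_gpComplIndicator {k : ℕ} (hk : k ∣ Fintype.card F - 1) :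
    ∑ c : F, gpComplIndicator k c = (((k - 1) * ((Fintype.card F - 1) / k) : ℕ) : ℂ) := by
  have hunits : Fintype.card Fˣ = Fintype.card F - 1 := Fintype.card_units F
  have hpowers : #(univ.filter (· ∈ (powMonoidHom k : Fˣ →* Fˣ).range)) =
      (Fintype.card F - 1) / k := by
    rw [← Fintype.card_subtype, ← Nat.card_eq_fintype_card, IsCyclic.card_powMonoidHom_range,
      Nat.card_eq_fintype_card, hunits, Nat.gcd_eq_right hk]
  have h := sum_gpComplIndicator_mul (F := F) k 1
  simp only [Pi.one_apply, mul_one, sum_const, card_univ, hpowers, hunits, nsmul_eq_mul] at h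
  rw [h, Nat.sub_one_mul, Nat.mul_div_cancel' hk, Nat.cast_sub (Nat.div_le_self _ _)]

end ComplementIndicator

section GeneralizedPaley

variable (p : ℕ) [Fact p.Prime] (F : Type) [Field F] [Algebra (ZMod p) F]

noncomputable def traceAddChar : AddChar F ℂ :=
  ZMod.stdAddChar.compAddMonoidHom (Algebra.trace (ZMod p) F).toAddMonoidHom

theorem traceAddChar_apply (x : F) :
    traceAddChar p F x = Complex.exp (2 * Real.pi * Complex.I *
      ((Algebra.trace (ZMod p) F x).val : ℂ) / (p : ℂ)) := by
  simp [traceAddChar, ZMod.stdAddChar_apply, ZMod.toCircle_apply]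

variable [Fintype F]

theorem isPrimitive_traceAddChar : (traceAddChar p F).IsPrimitive := by
  refine AddChar.IsPrimitive.of_ne_one fun h => ?_
  obtain ⟨t, ht⟩ := Algebra.trace_surjective (ZMod p) F 1
  have h1 : ZMod.stdAddChar (N := p) 1 = ZMod.stdAddChar (N := p) 0 := by
    rw [AddChar.map_zero_eq_one, ← ht]
    exact DFunLike.congr_fun h t
  exact one_ne_zero (ZMod.injective_stdAddChar h1)

variable {p F}

theorem gaussianPeriod_eq_sum_range_powMonoidHom {ω a y : Fˣ} {k i : ℕ} (ha : a = ω ^ i * y ^ k) :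
    gaussianPeriod p F ω k i =
      ∑ x ∈ univ.filter (· ∈ (powMonoidHom k : Fˣ →* Fˣ).range), traceAddChar p F (a * x) := by
  have hcoset : univ.filter (fun x : Fˣ => ∃ z : Fˣ, x = ω ^ i * z ^ k) =
      (univ.filter (· ∈ (powMonoidHom k : Fˣ →* Fˣ).range)).image (a * ·) := by
    ext x
    simp only [mem_filter, mem_univ, true_and, mem_image, MonoidHom.mem_range, powMonoidHom_apply,
      ha]
    constructor
    · rintro ⟨z, rfl⟩
      exact ⟨(y⁻¹ * z) ^ k, ⟨_, rfl⟩, by rw [mul_pow, inv_pow, mul_assoc, mul_inv_cancel_left]⟩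
    · rintro ⟨_, ⟨w, rfl⟩, rfl⟩
      exact ⟨y * w, by rw [mul_pow, mul_assoc]⟩
  rw [gaussianPeriod, hcoset, sum_image (mul_right_injective a).injOn]
  simp only [traceAddChar_apply, Units.val_mul]

theorem gaussianPeriod_periodic (ω : Fˣ) (k : ℕ) :
    Function.Periodic (gaussianPeriod p F ω k) k := fun i =>
  (gaussianPeriod_eq_sum_range_powMonoidHom (y := 1) (by simp)).trans
    (gaussianPeriod_eq_sum_range_powMonoidHom (y := ω) (pow_add ω i k)).symm

theorem sum_gpComplIndicator_mul_traceAddChar {ω a y : Fˣ} {k i : ℕ} (ha : a = ω ^ i * y ^ k) :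
    ∑ c, gpComplIndicator k c * traceAddChar p F (a * c) = -1 - gaussianPeriod p F ω k i := by
  have hunits : ∑ u : Fˣ, traceAddChar p F (a * u) = -1 := by
    have h := AddChar.sum_mulShift (a : F) (isPrimitive_traceAddChar p F)
    rw [if_neg a.ne_zero, Fintype.sum_eq_apply_zero_add_sum_units] at h
    simp only [mul_comm _ (a : F), mul_zero, AddChar.map_zero_eq_one, Nat.cast_zero] at h
    linear_combination h
  rw [sum_gpComplIndicator_mul, hunits, gaussianPeriod_eq_sum_range_powMonoidHom ha]

end GeneralizedPaley

theorem stmt_1_general (p m k n : ℕ) (hp : p.Prime)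
    (F : Type) [Field F] [Fintype F] [Algebra (ZMod p) F]
    (hF : Fintype.card F = p ^ m)
    (ω : Fˣ) (hω : ∀ u : Fˣ, u ∈ Subgroup.zpowers ω)
    (hkq : k ∣ p ^ m - 1) (hn : n = (p ^ m - 1) / k) :
    (gpAdjCompl F k).charpoly =
      (X - C (((k - 1) * n : ℕ) : ℂ)) *
        ∏ i ∈ Finset.range k, (X - C (-1 - gaussianPeriod p F ω k i)) ^ n := by
  have := Fact.mk hp
  have hord : orderOf ω = k * n := by
    rw [orderOf_eq_card_of_forall_mem_zpowers hω, Nat.card_units, Nat.card_eq_fintype_card, hF,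
      hn, Nat.mul_div_cancel' hkq]
  rw [gpAdjCompl_eq_convolution, (isPrimitive_traceAddChar p F).charpoly_convolution,
    Fintype.prod_eq_apply_zero_mul_prod_units, IsCyclic.prod_eq_prod_range_orderOf hω, hord]
  simp only [zero_mul, AddChar.map_zero_eq_one, mul_one]
  have hper : Function.Periodic (fun i => X - C (-1 - gaussianPeriod p F ω k i)) k := fun i => by
    simp only [gaussianPeriod_periodic ω k i]
  rw [sum_gpComplIndicator (hF ▸ hkq), hF, ← hn, prod_pow, ← hper.prod_range_mul]
  refine congrArg _ (prod_congr rfl fun j _ => ?_)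
  rw [sum_gpComplIndicator_mul_traceAddChar (ω := ω) (i := j) (y := 1) (by simp)]

theorem stmt_1 (p m k n : ℕ) (hp : p.Prime) (hm : 0 < m)
    (F : Type) [Field F] [Fintype F] [Algebra (ZMod p) F]
    (hF : Fintype.card F = p ^ m)
    (ω : Fˣ) (hω : ∀ u : Fˣ, u ∈ Subgroup.zpowers ω)
    (hk : 0 < k) (hkq : k ∣ p ^ m - 1) (hn : n = (p ^ m - 1) / k) :
    (gpAdjCompl F k).charpoly =
      (X - C (((k - 1) * n : ℕ) : ℂ)) *
        ∏ i ∈ Finset.range k, (X - C (-1 - gaussianPeriod p F ω k i)) ^ n :=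
  stmt_1_general p m k n hp F hF ω hω hkq hn
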